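/- In the two-miner coordinated model, strict inequality of latencies produces unfairness irrespective of the compute capacities: let X_1 and X_2 be independent exponential random variables with rates h_1 > 0 and h_2 > 0, and let 0 ≤ d_1 < d_2 be shifts. Then P( X_1 + d_1 ≤ X_2 + d_2 ) > h_1/(h_1 + h_2) and P( X_2 + d_2 ≤ X_1 + d_1 ) < h_2/(h_1 + h_2); that is, the miner farther from the coordinator receives strictly less than its fair share h_2/(h_1+h_2) of blocks, and the closer miner strictly more than its fair share h_1/(h_1+h_2). -/

import Mathlib

/-!
The winning event of the farther miner, `X₂ + d₂ ≤ X₁ + d₁`, requires `X₁` to exceed `X₂` by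
at least `d = d₂ - d₁`. Conditionally on `X₂ = y` this has probability
`P(X₁ ≥ y + d) = exp (-h₁ (y + d))`, and integrating against the law of `X₂` yields
`exp (-h₁ d) · h₂ / (h₁ + h₂)`: the fair share damped by a factor `< 1` when `d > 0`.
The two winning events cover the sample space, so the closer miner gets strictly more
than `h₁ / (h₁ + h₂)`.
-/

open MeasureTheory ProbabilityTheory Real Set

namespace ProbabilityTheory

lemma expMeasure_eq_withDensity (r : ℝ) : expMeasure r = volume.withDensity (exponentialPDF r) :=
  rfl

lemma measurable_exponentialPDF (r : ℝ) : Measurable (exponentialPDF r) :=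
  (measurable_exponentialPDFReal r).ennreal_ofReal

lemma expMeasure_singleton (r t : ℝ) : expMeasure r {t} = 0 := by
  rw [expMeasure_eq_withDensity]
  exact withDensity_absolutelyContinuous _ _ Real.volume_singleton

lemma expMeasure_Ici {r : ℝ} (hr : 0 < r) {t : ℝ} (ht : 0 ≤ t) :
    expMeasure r (Ici t) = ENNReal.ofReal (exp (-(r * t))) := by
  have := isProbabilityMeasure_expMeasure hr
  rw [← measure_congr (Ioi_ae_eq_Ici' (expMeasure_singleton r t)), ← ofReal_measureReal,
    ← compl_Iic, probReal_compl_eq_one_sub measurableSet_Iic, ← cdf_eq_real,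
    cdf_expMeasure_eq hr, if_pos ht, sub_sub_cancel]

lemma exponentialPDF_mul_exp_neg_mul {h₁ h₂ : ℝ} (hsum : 0 < h₁ + h₂) (d : ℝ) {y : ℝ}
    (hy : 0 ≤ y) :
    exponentialPDF h₂ y * ENNReal.ofReal (exp (-(h₁ * (y + d))))
      = ENNReal.ofReal (exp (-(h₁ * d)) * (h₂ / (h₁ + h₂))) * exponentialPDF (h₁ + h₂) y := by
  rw [exponentialPDF_of_nonneg hy, exponentialPDF_of_nonneg hy,
    ← ENNReal.ofReal_mul' (exp_pos _).le, ← ENNReal.ofReal_mul' (by positivity)]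
  have hexp : exp (-(h₂ * y)) * exp (-(h₁ * (y + d)))
      = exp (-(h₁ * d)) * exp (-((h₁ + h₂) * y)) := by
    rw [← exp_add, ← exp_add]
    ring_nf
  congr 1
  rw [mul_assoc, hexp]
  field_simp

lemma prod_expMeasure_add_le {h₁ h₂ : ℝ} (hh₁ : 0 < h₁) (hh₂ : 0 < h₂) {d : ℝ} (hd : 0 ≤ d) :
    (expMeasure h₁).prod (expMeasure h₂) {p : ℝ × ℝ | p.2 + d ≤ p.1}
      = ENNReal.ofReal (exp (-(h₁ * d)) * (h₂ / (h₁ + h₂))) := by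
  have := isProbabilityMeasure_expMeasure hh₁
  have := isProbabilityMeasure_expMeasure hh₂
  have hslice (y : ℝ) : (fun x ↦ (x, y)) ⁻¹' {p : ℝ × ℝ | p.2 + d ≤ p.1} = Ici (y + d) := by
    ext; simp
  have hint (y : ℝ) : exponentialPDF h₂ y * expMeasure h₁ (Ici (y + d))
      = ENNReal.ofReal (exp (-(h₁ * d)) * (h₂ / (h₁ + h₂))) * exponentialPDF (h₁ + h₂) y := by
    rcases lt_or_ge y 0 with hy | hy
    · simp [exponentialPDF_of_neg hy]
    · rw [expMeasure_Ici hh₁ (by linarith),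
        exponentialPDF_mul_exp_neg_mul (by positivity) d hy]
  rw [Measure.prod_apply_symm (measurableSet_le (measurable_snd.add_const d) measurable_fst)]
  simp_rw [hslice]
  rw [expMeasure_eq_withDensity, lintegral_withDensity_eq_lintegral_mul_non_measurable _
      (measurable_exponentialPDF h₂) (ae_of_all _ fun _ ↦ ENNReal.ofReal_lt_top)]
  simp only [Pi.mul_apply]
  rw [lintegral_congr hint, lintegral_const_mul _ (measurable_exponentialPDF _),
    lintegral_exponentialPDF_eq_one (by positivity), mul_one]

lemma measure_add_le_add_of_indepFun_expMeasure {Ω : Type*} [MeasurableSpace Ω] {μ : Measure Ω}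
    [IsFiniteMeasure μ] {h₁ h₂ : ℝ} (hh₁ : 0 < h₁) (hh₂ : 0 < h₂) {X₁ X₂ : Ω → ℝ}
    (hX₁ : Measurable X₁) (hX₂ : Measurable X₂) (hindep : IndepFun X₁ X₂ μ)
    (hlaw₁ : μ.map X₁ = expMeasure h₁) (hlaw₂ : μ.map X₂ = expMeasure h₂) {d₁ d₂ : ℝ}
    (hd : d₁ ≤ d₂) :
    μ {ω | X₂ ω + d₂ ≤ X₁ ω + d₁}
      = ENNReal.ofReal (exp (-(h₁ * (d₂ - d₁))) * (h₂ / (h₁ + h₂))) := by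
  have hjoint : μ.map (fun ω ↦ (X₁ ω, X₂ ω)) = (expMeasure h₁).prod (expMeasure h₂) := by
    rw [← hlaw₁, ← hlaw₂]
    exact (indepFun_iff_map_prod_eq_prod_map_map hX₁.aemeasurable hX₂.aemeasurable).mp hindep
  have hevent : {ω | X₂ ω + d₂ ≤ X₁ ω + d₁}
      = (fun ω ↦ (X₁ ω, X₂ ω)) ⁻¹' {p : ℝ × ℝ | p.2 + (d₂ - d₁) ≤ p.1} := by
    ext ω
    simp only [mem_ofPred_eq, mem_preimage]
    constructor <;> intro h <;> linarith
  rw [hevent, ← Measure.map_apply (hX₁.prodMk hX₂)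
      (measurableSet_le (measurable_snd.add_const _) measurable_fst),
    hjoint, prod_expMeasure_add_le hh₁ hh₂ (sub_nonneg.mpr hd)]

end ProbabilityTheory

theorem unfairness_two_miners_strict_latency
    {Ω : Type*} [MeasurableSpace Ω] (μ : Measure Ω) [IsProbabilityMeasure μ]
    (h₁ h₂ : ℝ) (hh₁ : 0 < h₁) (hh₂ : 0 < h₂)
    (d₁ d₂ : ℝ) (hd₁₂ : d₁ < d₂)
    (X₁ X₂ : Ω → ℝ) (hX₁ : Measurable X₁) (hX₂ : Measurable X₂)
    (hindep : IndepFun X₁ X₂ μ)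
    (hlaw₁ : μ.map X₁ = expMeasure h₁) (hlaw₂ : μ.map X₂ = expMeasure h₂) :
    (μ {ω | X₁ ω + d₁ ≤ X₂ ω + d₂}).toReal > h₁ / (h₁ + h₂) ∧
      (μ {ω | X₂ ω + d₂ ≤ X₁ ω + d₁}).toReal < h₂ / (h₁ + h₂) := by
  have hfar : μ.real {ω | X₂ ω + d₂ ≤ X₁ ω + d₁}
      = exp (-(h₁ * (d₂ - d₁))) * (h₂ / (h₁ + h₂)) := by
    rw [measureReal_def, measure_add_le_add_of_indepFun_expMeasure hh₁ hh₂ hX₁ hX₂ hindep hlaw₁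
      hlaw₂ hd₁₂.le, ENNReal.toReal_ofReal (by positivity)]
  have hdamp : exp (-(h₁ * (d₂ - d₁))) < 1 := Real.exp_lt_one_iff.mpr (by nlinarith)
  have hcover : 1 ≤ μ.real {ω | X₁ ω + d₁ ≤ X₂ ω + d₂} + μ.real {ω | X₂ ω + d₂ ≤ X₁ ω + d₁} :=
    calc 1 = μ.real univ := probReal_univ.symm
      _ = μ.real ({ω | X₁ ω + d₁ ≤ X₂ ω + d₂} ∪ {ω | X₂ ω + d₂ ≤ X₁ ω + d₁}) := by
        congr 1; ext ω; simp [le_total]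
      _ ≤ _ := measureReal_union_le _ _
  have hshares : h₁ / (h₁ + h₂) + h₂ / (h₁ + h₂) = 1 := by field_simp
  have hlt : μ.real {ω | X₂ ω + d₂ ≤ X₁ ω + d₁} < h₂ / (h₁ + h₂) :=
    hfar ▸ mul_lt_of_lt_one_left (by positivity) hdamp
  refine ⟨?_, hlt⟩
  change _ < μ.real _
  linarith
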